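/- arXiv:2410.01163 — 2 statements merged into one kernel-verified Lean document; each statement's English description precedes it below -/
import Mathlib

section
/- Let u ∈ ℝ^n be a unit vector in the column space of Z ∈ ℝ^{n×p} (with Z^⊤Z = n·I_p), written u = n^{−1/2}·Zx with ‖x‖ = 1. Let P_N be the orthogonal projection onto a subspace N spanned by columns r+1,…,K of W (with W^⊤W = n·I_K), and suppose (1/n)·W_{(r+1):K}^⊤ Z_{1:r} = 0 and ‖(1/n)·W_{(r+1):K}^⊤ Z_{(r+1):p}‖ ≤ σ < 1. If P̂_N is another orthogonal projection with ‖P̂_N − P_N‖ ≤ τ and σ + τ < 1, then ‖P̂_N·u‖ ≤ σ‖x‖ + τ < 1. Consequently col(Z) ∩ range(P̂_N) = {0}. -/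
open Matrix

/-!
Write `P_N = n⁻¹ B Bᵀ` with `B = W_{(r+1):K}`, so that `Bᵀ B = n I`. For `y = Z c` in `col(Z)`,
`‖P_N y‖ = n^{-1/2} ‖Bᵀ Z c‖ ≤ ‖n⁻¹ Bᵀ Z‖ ‖y‖`, and the only nonzero block of `n⁻¹ Bᵀ Z` is
`n⁻¹ W_{(r+1):K}ᵀ Z_{(r+1):p}`, whose norm is at most `σ`. Adding the perturbation gives
`‖P̂_N y‖ ≤ (σ + τ) ‖y‖` on `col(Z)`; as `σ + τ < 1`, no nonzero vector of `col(Z)` is fixed by `P̂_N`.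
-/

/-- The Euclidean norm of a real vector. -/
noncomputable def enorm {n : Type*} [Fintype n] (x : n → ℝ) : ℝ :=
  Real.sqrt (∑ i, x i ^ 2)

/-- The spectral (ℓ²-operator) norm of a real matrix. -/
noncomputable def specNorm {m n : Type*} [Fintype m] [Fintype n] [DecidableEq n]
    (M : Matrix m n ℝ) : ℝ :=
  ‖LinearMap.toContinuousLinearMap (Matrix.toEuclideanLin M)‖

section EuclideanNorm

variable {ι : Type*} [Fintype ι]

theorem enorm_eq_norm_toLp (x : ι → ℝ) : _root_.enorm x = ‖WithLp.toLp 2 x‖ := by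
  simp [_root_.enorm, EuclideanSpace.norm_eq]

theorem enorm_eq_sqrt_dotProduct (x : ι → ℝ) : _root_.enorm x = √(x ⬝ᵥ x) := by
  simp [_root_.enorm, dotProduct, sq]

theorem enorm_nonneg (x : ι → ℝ) : 0 ≤ _root_.enorm x :=
  Real.sqrt_nonneg _

theorem enorm_eq_zero_iff {x : ι → ℝ} : _root_.enorm x = 0 ↔ x = 0 := by
  rw [enorm_eq_norm_toLp, norm_eq_zero, WithLp.toLp_eq_zero]

theorem enorm_smul_eq_abs_mul (c : ℝ) (x : ι → ℝ) :
    _root_.enorm (c • x) = |c| * _root_.enorm x := by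
  rw [enorm_eq_norm_toLp, enorm_eq_norm_toLp, WithLp.toLp_smul, norm_smul, Real.norm_eq_abs]

theorem enorm_restrict_le (S : ι → Prop) [DecidablePred S] (x : ι → ℝ) :
    _root_.enorm (fun i : {i // S i} => x i) ≤ _root_.enorm x := by
  refine Real.sqrt_le_sqrt ?_
  rw [← Fintype.sum_subtype_add_sum_subtype S (fun i => x i ^ 2)]
  exact le_add_of_nonneg_right (Finset.sum_nonneg fun i _ => sq_nonneg _)

end EuclideanNorm

theorem mulVec_eq_submatrix_mulVec_of_eq_zero {m q : Type*} [Fintype q]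
    (S : q → Prop) [DecidablePred S] {A : Matrix m q ℝ} (hA : ∀ j i, ¬ S i → A j i = 0)
    (v : q → ℝ) : A *ᵥ v = A.submatrix id Subtype.val *ᵥ fun i : {i // S i} => v i := by
  ext j
  have hzero : ∑ i : {i // ¬ S i}, A j i * v i = 0 :=
    Finset.sum_eq_zero fun i _ => by rw [hA j i i.2, zero_mul]
  rw [mulVec, dotProduct, ← Fintype.sum_subtype_add_sum_subtype S, hzero, add_zero]
  rfl

theorem transpose_mul_self_submatrix_of_injective {m q ι : Type*} [Fintype m] [DecidableEq q]
    [DecidableEq ι] {ν : ℝ} {W : Matrix m q ℝ} (hW : Wᵀ * W = ν • 1) {e : ι → q}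
    (he : Function.Injective e) : (W.submatrix id e)ᵀ * W.submatrix id e = ν • 1 := by
  rw [transpose_submatrix, ← submatrix_mul _ _ _ _ _ Function.bijective_id, hW, submatrix_smul,
    Pi.smul_apply, Pi.smul_apply, submatrix_one _ he]

section SpectralNorm

variable {m q : Type*} [Fintype m] [Fintype q] [DecidableEq q]

theorem enorm_mulVec_of_transpose_mul_self {ν : ℝ} (hν : 0 ≤ ν) {A : Matrix m q ℝ}
    (hA : Aᵀ * A = ν • 1) (c : q → ℝ) : _root_.enorm (A *ᵥ c) = √ν * _root_.enorm c := by
  have hdot : (A *ᵥ c) ⬝ᵥ (A *ᵥ c) = ν * (c ⬝ᵥ c) := by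
    rw [dotProduct_mulVec (A *ᵥ c), ← mulVec_transpose, mulVec_mulVec, hA, smul_mulVec,
      one_mulVec, smul_dotProduct, smul_eq_mul]
  rw [enorm_eq_sqrt_dotProduct, enorm_eq_sqrt_dotProduct, hdot, Real.sqrt_mul hν]

theorem enorm_mulVec_le (M : Matrix m q ℝ) (v : q → ℝ) :
    _root_.enorm (M *ᵥ v) ≤ specNorm M * _root_.enorm v := by
  rw [enorm_eq_norm_toLp, enorm_eq_norm_toLp]
  exact (LinearMap.toContinuousLinearMap (toEuclideanLin M)).le_opNorm (WithLp.toLp 2 v)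

theorem specNorm_nonneg (M : Matrix m q ℝ) : 0 ≤ specNorm M :=
  norm_nonneg _

theorem specNorm_le_of_forall_enorm_mulVec_le {M : Matrix m q ℝ} {c : ℝ} (hc : 0 ≤ c)
    (h : ∀ v, _root_.enorm (M *ᵥ v) ≤ c * _root_.enorm v) : specNorm M ≤ c := by
  refine ContinuousLinearMap.opNorm_le_bound _ hc fun v => ?_
  have hv := h v.ofLp
  rw [enorm_eq_norm_toLp, enorm_eq_norm_toLp] at hv
  exact hv

theorem enorm_mulVec_le_add_specNorm_sub (P Q : Matrix m q ℝ) (u : q → ℝ) :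
    _root_.enorm (P *ᵥ u) ≤ _root_.enorm (Q *ᵥ u) + specNorm (P - Q) * _root_.enorm u := by
  calc _root_.enorm (P *ᵥ u) = _root_.enorm (Q *ᵥ u + (P - Q) *ᵥ u) := by
        rw [sub_mulVec, add_sub_cancel]
    _ ≤ _root_.enorm (Q *ᵥ u) + _root_.enorm ((P - Q) *ᵥ u) := by
        simpa only [enorm_eq_norm_toLp, WithLp.toLp_add] using norm_add_le _ _
    _ ≤ _ := add_le_add le_rfl (enorm_mulVec_le _ _)

theorem specNorm_le_specNorm_submatrix_of_eq_zero (S : q → Prop) [DecidablePred S]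
    {A : Matrix m q ℝ} (hA : ∀ j i, ¬ S i → A j i = 0) :
    specNorm A ≤ specNorm (A.submatrix id (Subtype.val : {i // S i} → q)) := by
  refine specNorm_le_of_forall_enorm_mulVec_le (specNorm_nonneg _) fun v => ?_
  rw [mulVec_eq_submatrix_mulVec_of_eq_zero S hA]
  exact (enorm_mulVec_le _ _).trans
    (mul_le_mul_of_nonneg_left (enorm_restrict_le S v) (specNorm_nonneg _))

end SpectralNorm

section Projection

variable {m ι q : Type*} [Fintype m] [Fintype ι] [Fintype q] [DecidableEq ι] [DecidableEq q]
  {ν : ℝ} {B : Matrix m ι ℝ} {Z : Matrix m q ℝ}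

theorem enorm_projection_mulVec_le (hν : 0 ≤ ν) (hB : Bᵀ * B = ν • 1) (hZ : Zᵀ * Z = ν • 1)
    (c : q → ℝ) :
    _root_.enorm ((ν⁻¹ • (B * Bᵀ)) *ᵥ (Z *ᵥ c)) ≤
      specNorm (ν⁻¹ • (Bᵀ * Z)) * _root_.enorm (Z *ᵥ c) := by
  have hPZ : (ν⁻¹ • (B * Bᵀ)) *ᵥ (Z *ᵥ c) = B *ᵥ ((ν⁻¹ • (Bᵀ * Z)) *ᵥ c) := by
    rw [mulVec_mulVec, mulVec_mulVec, Matrix.mul_smul, Matrix.smul_mul, Matrix.mul_assoc]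
  rw [hPZ, enorm_mulVec_of_transpose_mul_self hν hB, enorm_mulVec_of_transpose_mul_self hν hZ,
    mul_left_comm]
  exact mul_le_mul_of_nonneg_left (enorm_mulVec_le _ _) (Real.sqrt_nonneg _)

theorem enorm_perturbed_projection_mulVec_le (hν : 0 ≤ ν) (hB : Bᵀ * B = ν • 1)
    (hZ : Zᵀ * Z = ν • 1) {σ τ : ℝ} (hσ : specNorm (ν⁻¹ • (Bᵀ * Z)) ≤ σ)
    [DecidableEq m] {P : Matrix m m ℝ} (hτ : specNorm (P - ν⁻¹ • (B * Bᵀ)) ≤ τ) (c : q → ℝ) :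
    _root_.enorm (P *ᵥ (Z *ᵥ c)) ≤ (σ + τ) * _root_.enorm (Z *ᵥ c) := by
  have hZc := enorm_nonneg (Z *ᵥ c)
  calc _root_.enorm (P *ᵥ (Z *ᵥ c))
      ≤ _root_.enorm ((ν⁻¹ • (B * Bᵀ)) *ᵥ (Z *ᵥ c)) +
          specNorm (P - ν⁻¹ • (B * Bᵀ)) * _root_.enorm (Z *ᵥ c) :=
        enorm_mulVec_le_add_specNorm_sub _ _ _
    _ ≤ σ * _root_.enorm (Z *ᵥ c) + τ * _root_.enorm (Z *ᵥ c) := by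
        gcongr
        exact (enorm_projection_mulVec_le hν hB hZ c).trans (by gcongr)
    _ = (σ + τ) * _root_.enorm (Z *ᵥ c) := by ring

end Projection

theorem stmt16_general {n p k r : ℕ} (hn : 0 < n)
    (Z : Matrix (Fin n) (Fin p) ℝ) (W : Matrix (Fin n) (Fin k) ℝ)
    (hZ : Zᵀ * Z = (n : ℝ) • 1) (hW : Wᵀ * W = (n : ℝ) • 1)
    (hcross0 : ∀ (j : Fin k) (i : Fin p),
      r ≤ (j : ℕ) → (i : ℕ) < r → (Wᵀ * Z) j i = 0)
    (σ τ : ℝ)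
    (hcross : specNorm ((n : ℝ)⁻¹ •
      Matrix.of (fun (j : {j : Fin k // r ≤ (j : ℕ)})
        (i : {i : Fin p // r ≤ (i : ℕ)}) => (Wᵀ * Z) j.1 i.1)) ≤ σ)
    (PN PhatN : Matrix (Fin n) (Fin n) ℝ)
    (hPN : PN = (n : ℝ)⁻¹ •
      (Matrix.of (fun (i : Fin n) (j : {j : Fin k // r ≤ (j : ℕ)}) => W i j.1) *
        Matrix.of (fun (j : {j : Fin k // r ≤ (j : ℕ)}) (i : Fin n) => W i j.1)))
    (hτ : specNorm (PhatN - PN) ≤ τ) (hστ : σ + τ < 1)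
    (x : Fin p → ℝ) (hx : _root_.enorm x = 1)
    (u : Fin n → ℝ) (hu : u = (Real.sqrt n)⁻¹ • Z.mulVec x) :
    _root_.enorm (PhatN.mulVec u) ≤ σ * _root_.enorm x + τ ∧
    _root_.enorm (PhatN.mulVec u) < 1 ∧
    (∀ y : Fin n → ℝ, y ∈ Submodule.span ℝ (Set.range (fun i : Fin p => Zᵀ i)) →
      PhatN.mulVec y = y → y = 0) := by
  set B := W.submatrix id (Subtype.val : {j : Fin k // r ≤ (j : ℕ)} → Fin k)
  have hBB : Bᵀ * B = (n : ℝ) • 1 :=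
    transpose_mul_self_submatrix_of_injective hW Subtype.val_injective
  have hBZ : Bᵀ * Z = (Wᵀ * Z).submatrix Subtype.val id := by
    rw [transpose_submatrix, submatrix_mul _ _ _ _ _ Function.bijective_id, submatrix_id_id]
  have hσ : specNorm ((n : ℝ)⁻¹ • (Bᵀ * Z)) ≤ σ := by
    refine (specNorm_le_specNorm_submatrix_of_eq_zero (fun i : Fin p => r ≤ (i : ℕ)) ?_).trans ?_
    · intro j i hi
      simp only [hBZ, Matrix.smul_apply, submatrix_apply, id_eq, hcross0 j i j.2 (not_le.mp hi),
        smul_zero]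
    · rwa [hBZ]
  have hcol := enorm_perturbed_projection_mulVec_le n.cast_nonneg hBB hZ hσ (hPN ▸ hτ)
  have hu_norm : _root_.enorm u = 1 := by
    rw [hu, enorm_smul_eq_abs_mul, enorm_mulVec_of_transpose_mul_self n.cast_nonneg hZ, hx,
      abs_inv, abs_of_nonneg (Real.sqrt_nonneg _), mul_one,
      inv_mul_cancel₀ (Real.sqrt_ne_zero'.mpr (Nat.cast_pos.mpr hn))]
  have hPu : _root_.enorm (PhatN *ᵥ u) ≤ σ * _root_.enorm x + τ :=
    calc _root_.enorm (PhatN *ᵥ u) ≤ (σ + τ) * _root_.enorm u := by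
          simpa only [mulVec_smul, ← hu] using hcol ((Real.sqrt n)⁻¹ • x)
      _ = σ * _root_.enorm x + τ := by rw [hu_norm, hx]; ring
  refine ⟨hPu, hPu.trans_lt (by rwa [hx, mul_one]), fun y hy hfix => ?_⟩
  obtain ⟨c, rfl⟩ : ∃ c, Z *ᵥ c = y := by
    rwa [← Matrix.col, ← range_mulVecLin] at hy
  have h := hcol c
  rw [hfix] at h
  exact enorm_eq_zero_iff.mp (by nlinarith [enorm_nonneg (Z *ᵥ c)])

/-- Geometric step of the uniqueness proof (Corollary 3.1): for a unit vector
`u = n^{-1/2} Z x` in `col(Z)`, if the cross-correlation of `Z` with the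
complement block `W_{(r+1):K}` is bounded by `σ < 1`, the first-block
cross-correlation vanishes, and `P̂_N` is an orthogonal projection with
`‖P̂_N − P_N‖ ≤ τ` and `σ + τ < 1`, then `‖P̂_N u‖ ≤ σ‖x‖ + τ < 1`, and
consequently `col(Z) ∩ range(P̂_N) = {0}`. -/
theorem stmt16 {n p k r : ℕ} (hn : 0 < n)
    (Z : Matrix (Fin n) (Fin p) ℝ) (W : Matrix (Fin n) (Fin k) ℝ)
    (hZ : Zᵀ * Z = (n : ℝ) • 1) (hW : Wᵀ * W = (n : ℝ) • 1)
    (hcross0 : ∀ (j : Fin k) (i : Fin p),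
      r ≤ (j : ℕ) → (i : ℕ) < r → (Wᵀ * Z) j i = 0)
    (σ τ : ℝ) (hσ : σ < 1)
    (hcross : specNorm ((n : ℝ)⁻¹ •
      Matrix.of (fun (j : {j : Fin k // r ≤ (j : ℕ)})
        (i : {i : Fin p // r ≤ (i : ℕ)}) => (Wᵀ * Z) j.1 i.1)) ≤ σ)
    (PN PhatN : Matrix (Fin n) (Fin n) ℝ)
    (hPN : PN = (n : ℝ)⁻¹ •
      (Matrix.of (fun (i : Fin n) (j : {j : Fin k // r ≤ (j : ℕ)}) => W i j.1) *
        Matrix.of (fun (j : {j : Fin k // r ≤ (j : ℕ)}) (i : Fin n) => W i j.1)))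
    (hsymm : PhatNᵀ = PhatN) (hidem : PhatN * PhatN = PhatN)
    (hτ : specNorm (PhatN - PN) ≤ τ) (hστ : σ + τ < 1)
    (x : Fin p → ℝ) (hx : _root_.enorm x = 1)
    (u : Fin n → ℝ) (hu : u = (Real.sqrt n)⁻¹ • Z.mulVec x) :
    _root_.enorm (PhatN.mulVec u) ≤ σ * _root_.enorm x + τ ∧
    _root_.enorm (PhatN.mulVec u) < 1 ∧
    (∀ y : Fin n → ℝ, y ∈ Submodule.span ℝ (Set.range (fun i : Fin p => Zᵀ i)) →
      PhatN.mulVec y = y → y = 0) :=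
  stmt16_general hn Z W hZ hW hcross0 σ τ hcross PN PhatN hPN hτ hστ x hx u hu
end

section
/- Let (Uᵢ)_{i≥1} be independent real random variables with E[Uᵢ] = 0 and sup_i E|Uᵢ|^{1+ζ} < ∞ for some ζ > 0. Let (aᵢ) be real scalars with Σ_{i=1}^n |aᵢ| = O(n) and max_{1≤i≤n} |aᵢ| = o(n). Then (1/n)·Σ_{i=1}^n aᵢUᵢ → 0 in probability. -/
open MeasureTheory ProbabilityTheory

/-!
Truncate every `Uᵢ` at a common level `Kₙ → ∞` growing so slowly that
`Kₙ² · Σ_{i<n} (aᵢ/n)² → 0`; this is possible because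
`Σ_{i<n} (aᵢ/n)² ≤ (max_{i<n} |aᵢ|/n) · Σ_{i<n} |aᵢ|/n → 0`.
By independence the truncated weighted sum has variance at most `Kₙ² Σ_{i<n} (aᵢ/n)²`, so
Chebyshev's inequality makes its centred version small in probability. The remainder
`Uᵢ - trunc Uᵢ` is bounded by `|Uᵢ|^{1+ζ} / Kₙ^ζ`, so its weighted sum has `L¹` norm
`O(Kₙ^{-ζ})` and Markov's inequality applies. As `E Uᵢ = 0`, the two centred parts add up to
`(1/n) Σ_{i<n} aᵢ Uᵢ`.
-/

open Filter Topology Finset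

section Truncation

theorem abs_sub_truncation_le {α : Type*} (f : α → ℝ) {K ζ : ℝ} (hK : 0 < K) (hζ : 0 ≤ ζ)
    (x : α) : |f x - truncation f K x| ≤ |f x| ^ (1 + ζ) / K ^ ζ := by
  by_cases hx : f x ∈ Set.Ioc (-K) K
  · simp only [truncation, Function.comp_apply, Set.indicator_of_mem hx, id, sub_self, abs_zero]
    positivity
  have hKx : K ≤ |f x| := by
    rw [Set.mem_Ioc, not_and_or, not_lt, not_le] at hx
    rcases hx with h | h
    · rw [abs_of_neg (by linarith)]; linarith
    · rw [abs_of_pos (by linarith)]; exact h.le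
  simp only [truncation, Function.comp_apply, Set.indicator_of_notMem hx, sub_zero]
  rw [le_div_iff₀ (by positivity), Real.rpow_add (hK.trans_le hKx), Real.rpow_one]
  gcongr

variable {Ω : Type*} [MeasurableSpace Ω] {μ : Measure Ω}

theorem integral_abs_sub_truncation_le [IsFiniteMeasure μ] {X : Ω → ℝ} (hX : Integrable X μ)
    {K ζ : ℝ} (hK : 0 < K) (hζ : 0 ≤ ζ) (hmom : Integrable (fun ω => |X ω| ^ (1 + ζ)) μ) :
    ∫ ω, |X ω - truncation X K ω| ∂μ ≤ (∫ ω, |X ω| ^ (1 + ζ) ∂μ) / K ^ ζ := by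
  rw [← integral_div]
  exact integral_mono (hX.sub hX.1.integrable_truncation).abs (hmom.div_const _)
    (abs_sub_truncation_le X hK hζ)

theorem variance_truncation_le [IsProbabilityMeasure μ] {X : Ω → ℝ}
    (hX : AEStronglyMeasurable X μ) (K : ℝ) : variance (truncation X K) μ ≤ K ^ 2 := by
  have h := variance_le_sq_of_bounded (a := -|K|) (b := |K|)
    (ae_of_all _ fun ω => abs_le.mp (abs_truncation_le_bound X K ω)) hX.truncation.aemeasurable
  rwa [sub_neg_eq_add, ← two_mul, mul_div_cancel_left₀ _ two_ne_zero, sq_abs] at h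

theorem variance_sum_mul_truncation_le [IsProbabilityMeasure μ] {ι : Type*} {U : ι → Ω → ℝ}
    (hU : iIndepFun U μ) (hm : ∀ i, AEStronglyMeasurable (U i) μ) (w : ι → ℝ) (s : Finset ι)
    (K : ℝ) :
    variance (fun ω => ∑ i ∈ s, w i * truncation (U i) K ω) μ ≤ K ^ 2 * ∑ i ∈ s, w i ^ 2 := by
  set g : ι → ℝ → ℝ := fun i x => w i * Set.indicator (Set.Ioc (-K) K) id x
  have hg : ∀ i, Measurable (g i) := fun i =>
    (measurable_id.indicator measurableSet_Ioc).const_mul _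
  have hsum : (fun ω => ∑ i ∈ s, w i * truncation (U i) K ω) = ∑ i ∈ s, g i ∘ U i := by
    ext ω; simp [Finset.sum_apply, g, truncation]
  rw [hsum, IndepFun.variance_sum (X := fun i => g i ∘ U i)
    (fun i _ => (hm i).memLp_truncation.const_mul (w i))
    (fun i _ j _ hij => (hU.comp g hg).indepFun hij), mul_sum]
  refine sum_le_sum fun i _ => ?_
  calc variance (g i ∘ U i) μ = w i ^ 2 * variance (truncation (U i) K) μ :=
        variance_const_mul _ _ _
    _ ≤ K ^ 2 * w i ^ 2 := by
        rw [mul_comm (K ^ 2)]; gcongr; exact variance_truncation_le (hm i) K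

end Truncation

section ConvergenceInMeasure

variable {Ω κ : Type*} [MeasurableSpace Ω] {μ : Measure Ω} {l : Filter κ}

theorem MeasureTheory.TendstoInMeasure.add {E : Type*} [SeminormedAddCommGroup E]
    {f f' : κ → Ω → E} {g g' : Ω → E} (hf : TendstoInMeasure μ f l g)
    (hf' : TendstoInMeasure μ f' l g') : TendstoInMeasure μ (f + f') l (g + g') := by
  rw [tendstoInMeasure_iff_norm] at *
  intro ε hε
  refine tendsto_of_tendsto_of_tendsto_of_le_of_le tendsto_const_nhds
    (by simpa using (hf (ε / 2) (half_pos hε)).add (hf' (ε / 2) (half_pos hε)))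
    (fun _ => zero_le) fun n => (measure_mono fun ω hω => ?_).trans (measure_union_le _ _)
  simp only [Set.mem_ofPred_eq, Set.mem_union, Pi.add_apply] at hω ⊢
  by_contra! ⟨hlt, hlt'⟩
  rw [add_sub_add_comm] at hω
  linarith [norm_add_le (f n ω - g ω) (f' n ω - g' ω)]

theorem tendstoInMeasure_sub_integral_of_tendsto_variance [IsFiniteMeasure μ]
    {f : κ → Ω → ℝ} (hf : ∀ n, MemLp (f n) 2 μ)
    (h : Tendsto (fun n => variance (f n) μ) l (𝓝 0)) :
    TendstoInMeasure μ (fun n ω => f n ω - μ[f n]) l 0 := by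
  rw [tendstoInMeasure_iff_norm]
  intro ε hε
  have hbound : Tendsto (fun n => ENNReal.ofReal (variance (f n) μ / ε ^ 2)) l (𝓝 0) := by
    simpa using ENNReal.tendsto_ofReal (h.div_const (ε ^ 2))
  refine tendsto_of_tendsto_of_tendsto_of_le_of_le tendsto_const_nhds hbound
    (fun _ => zero_le) fun n => ?_
  simpa [Real.norm_eq_abs] using meas_ge_le_variance_div_sq (hf n) hε

theorem integral_abs_sub_integral_le [IsProbabilityMeasure μ] {f : Ω → ℝ}
    (hf : Integrable f μ) : ∫ ω, |f ω - μ[f]| ∂μ ≤ 2 * ∫ ω, |f ω| ∂μ := by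
  calc ∫ ω, |f ω - μ[f]| ∂μ ≤ ∫ ω, (|f ω| + |μ[f]|) ∂μ :=
        integral_mono (hf.sub (integrable_const _)).abs (hf.abs.add (integrable_const _))
          fun ω => abs_sub _ _
    _ = ∫ ω, |f ω| ∂μ + |μ[f]| := by
        rw [integral_add hf.abs (integrable_const _), integral_const, probReal_univ, one_smul]
    _ ≤ 2 * ∫ ω, |f ω| ∂μ := by linarith [abs_integral_le_integral_abs (f := f) (μ := μ)]

theorem tendstoInMeasure_sub_integral_of_tendsto_integral_abs [IsProbabilityMeasure μ]
    {f : κ → Ω → ℝ} (hf : ∀ n, Integrable (f n) μ)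
    (h : Tendsto (fun n => ∫ ω, |f n ω| ∂μ) l (𝓝 0)) :
    TendstoInMeasure μ (fun n ω => f n ω - μ[f n]) l 0 := by
  rw [tendstoInMeasure_iff_measureReal_norm]
  intro ε hε
  have hbound : Tendsto (fun n => 2 * (∫ ω, |f n ω| ∂μ) / ε) l (𝓝 0) := by
    simpa using (h.const_mul 2).div_const ε
  refine tendsto_of_tendsto_of_tendsto_of_le_of_le tendsto_const_nhds hbound
    (fun _ => measureReal_nonneg) fun n => ?_
  rw [le_div_iff₀ hε, mul_comm]
  simp only [Pi.zero_apply, sub_zero, Real.norm_eq_abs]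
  exact (mul_meas_ge_le_integral_of_nonneg (ae_of_all _ fun _ => abs_nonneg _)
    ((hf n).sub (integrable_const _)).abs ε).trans (integral_abs_sub_integral_le (hf n))

end ConvergenceInMeasure

section WeightedSums

variable {Ω ι κ : Type*} [MeasurableSpace Ω] {μ : Measure Ω} {l : Filter κ}

theorem integral_abs_sum_mul_le {f : ι → Ω → ℝ} {s : Finset ι} (c : ι → ℝ)
    (hf : ∀ i ∈ s, Integrable (f i) μ) {V : ℝ} (hV : ∀ i ∈ s, ∫ ω, |f i ω| ∂μ ≤ V) :
    ∫ ω, |∑ i ∈ s, c i * f i ω| ∂μ ≤ (∑ i ∈ s, |c i|) * V := by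
  have hint : ∀ i ∈ s, Integrable (fun ω => |c i| * |f i ω|) μ := fun i hi =>
    (hf i hi).abs.const_mul _
  calc ∫ ω, |∑ i ∈ s, c i * f i ω| ∂μ ≤ ∫ ω, ∑ i ∈ s, |c i| * |f i ω| ∂μ :=
        integral_mono (integrable_finsetSum s fun i hi => (hf i hi).const_mul (c i)).abs
          (integrable_finsetSum s hint) fun ω =>
            (abs_sum_le_sum_abs _ _).trans_eq (by simp only [abs_mul])
    _ = ∑ i ∈ s, |c i| * ∫ ω, |f i ω| ∂μ := by
        rw [integral_finsetSum s hint]; simp only [integral_const_mul]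
    _ ≤ (∑ i ∈ s, |c i|) * V := by
        rw [sum_mul]; exact sum_le_sum fun i hi => by gcongr; exact hV i hi

theorem sum_mul_eq_sub_integral_add_sub_integral {U Y : ι → Ω → ℝ}
    (hU : ∀ i, Integrable (U i) μ) (hmean : ∀ i, μ[U i] = 0) (hY : ∀ i, Integrable (Y i) μ)
    (c : ι → ℝ) (s : Finset ι) (ω : Ω) :
    ∑ i ∈ s, c i * U i ω =
      (∑ i ∈ s, c i * Y i ω - μ[fun ω => ∑ i ∈ s, c i * Y i ω]) +
        (∑ i ∈ s, c i * (U i ω - Y i ω) - μ[fun ω => ∑ i ∈ s, c i * (U i ω - Y i ω)]) := by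
  rw [integral_finsetSum s fun i _ => (hY i).const_mul (c i),
    integral_finsetSum (f := fun i ω => c i * (U i ω - Y i ω)) s
      fun i _ => ((hU i).sub (hY i)).const_mul (c i)]
  simp only [integral_const_mul]
  simp only [integral_sub (hU _) (hY _), hmean, zero_sub, mul_neg, sum_neg_distrib, mul_sub,
    sum_sub_distrib]
  ring

variable [IsProbabilityMeasure μ] {U : ι → Ω → ℝ} (s : κ → Finset ι) (w : κ → ι → ℝ)
  {K : κ → ℝ}

theorem tendstoInMeasure_sum_mul_truncation (hU : iIndepFun U μ)
    (hm : ∀ i, AEStronglyMeasurable (U i) μ)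
    (h : Tendsto (fun n => K n ^ 2 * ∑ i ∈ s n, w n i ^ 2) l (𝓝 0)) :
    TendstoInMeasure μ (fun n ω => ∑ i ∈ s n, w n i * truncation (U i) (K n) ω -
      μ[fun ω => ∑ i ∈ s n, w n i * truncation (U i) (K n) ω]) l 0 :=
  tendstoInMeasure_sub_integral_of_tendsto_variance
    (fun _ => memLp_finsetSum _ fun i _ => (hm i).memLp_truncation.const_mul _)
    (squeeze_zero (fun _ => variance_nonneg _ _)
      (fun n => variance_sum_mul_truncation_le hU hm (w n) (s n) (K n)) h)

theorem tendstoInMeasure_sum_mul_sub_truncation (hU : ∀ i, Integrable (U i) μ) {ζ M : ℝ}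
    (hζ : 0 ≤ ζ) (hmom : ∀ i, Integrable (fun ω => |U i ω| ^ (1 + ζ)) μ)
    (hmomB : ∀ i, ∫ ω, |U i ω| ^ (1 + ζ) ∂μ ≤ M) (hK : ∀ n, 0 < K n)
    (h : Tendsto (fun n => (∑ i ∈ s n, |w n i|) / K n ^ ζ) l (𝓝 0)) :
    TendstoInMeasure μ (fun n ω => ∑ i ∈ s n, w n i * (U i ω - truncation (U i) (K n) ω) -
      μ[fun ω => ∑ i ∈ s n, w n i * (U i ω - truncation (U i) (K n) ω)]) l 0 := by
  have htail : ∀ n i, Integrable (fun ω => U i ω - truncation (U i) (K n) ω) μ := fun n i =>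
    (hU i).sub (hU i).1.integrable_truncation
  refine tendstoInMeasure_sub_integral_of_tendsto_integral_abs
    (fun n => integrable_finsetSum _ fun i _ => (htail n i).const_mul _)
    (squeeze_zero (fun n => integral_nonneg fun _ => abs_nonneg _) (fun n => ?_)
      (by simpa using h.mul_const M))
  calc _ ≤ (∑ i ∈ s n, |w n i|) * (M / K n ^ ζ) :=
        integral_abs_sum_mul_le _ (fun i _ => htail n i) fun i _ =>
          (integral_abs_sub_truncation_le (hU i) (hK n) hζ (hmom i)).trans
            (div_le_div_of_nonneg_right (hmomB i) (Real.rpow_nonneg (hK n).le ζ))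
    _ = (∑ i ∈ s n, |w n i|) / K n ^ ζ * M := by ring

end WeightedSums

section Weights

variable {a : ℕ → ℝ} {C : ℝ}

theorem sum_abs_div_le (hO : ∀ n : ℕ, ∑ i ∈ range n, |a i| ≤ C * n) (n : ℕ) :
    ∑ i ∈ range n, |a i / n| ≤ C := by
  rcases n.eq_zero_or_pos with rfl | hn
  · simpa using (abs_nonneg (a 0)).trans (by simpa using hO 1)
  simp only [abs_div, Nat.abs_cast, ← sum_div]
  rw [div_le_iff₀ (by exact_mod_cast hn)]
  exact hO n

theorem tendsto_sum_sq_div_zero (hO : ∀ n : ℕ, ∑ i ∈ range n, |a i| ≤ C * n)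
    (ho : ∀ ε : ℝ, 0 < ε → ∃ N : ℕ, ∀ n ≥ N, ∀ i < n, |a i| ≤ ε * n) :
    Tendsto (fun n : ℕ => ∑ i ∈ range n, (a i / n) ^ 2) atTop (𝓝 0) := by
  have hC : 0 ≤ C := (sum_nonneg fun i _ => abs_nonneg _).trans (sum_abs_div_le hO 0)
  rw [Metric.tendsto_atTop]
  intro ε hε
  obtain ⟨N, hN⟩ := ho (ε / (C + 1)) (by positivity)
  refine ⟨N, fun n hn => ?_⟩
  have hterm : ∀ i ∈ range n, (a i / n) ^ 2 ≤ ε / (C + 1) * |a i / n| := fun i hi => by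
    have hi' : |a i / n| ≤ ε / (C + 1) := by
      have hi : i < n := mem_range.mp hi
      rw [abs_div, Nat.abs_cast, div_le_iff₀ (Nat.cast_pos.mpr (Nat.zero_lt_of_lt hi))]
      exact hN n hn i hi
    rw [← sq_abs, sq]
    exact mul_le_mul_of_nonneg_right hi' (abs_nonneg _)
  rw [Real.dist_eq, sub_zero, abs_of_nonneg (sum_nonneg fun i _ => sq_nonneg _)]
  calc ∑ i ∈ range n, (a i / n) ^ 2 ≤ ε / (C + 1) * ∑ i ∈ range n, |a i / n| := by
        rw [mul_sum]; exact sum_le_sum hterm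
    _ ≤ ε / (C + 1) * C := by gcongr; exact sum_abs_div_le hO n
    _ < ε := by rw [div_mul_eq_mul_div, div_lt_iff₀ (by positivity)]; nlinarith

end Weights

theorem exists_tendsto_atTop_sq_mul_tendsto_zero {s : ℕ → ℝ} (hs0 : ∀ n, 0 ≤ s n)
    (hs : Tendsto s atTop (𝓝 0)) :
    ∃ K : ℕ → ℝ, (∀ n, 0 < K n) ∧ Tendsto K atTop atTop ∧
      Tendsto (fun n => K n ^ 2 * s n) atTop (𝓝 0) := by
  set t : ℕ → ℝ := fun n => s n + 1 / (n + 1)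
  have ht0 : ∀ n, 0 < t n := fun n => add_pos_of_nonneg_of_pos (hs0 n) Nat.one_div_pos_of_nat
  have ht : Tendsto t atTop (𝓝 0) := by
    simpa only [add_zero] using hs.add tendsto_one_div_add_atTop_nhds_zero_nat
  refine ⟨fun n => t n ^ (-(1 / 4) : ℝ), fun n => Real.rpow_pos_of_pos (ht0 n) _,
    (tendsto_rpow_neg_nhdsGT_zero (by norm_num)).comp
      (tendsto_nhdsWithin_iff.2 ⟨ht, Eventually.of_forall ht0⟩), ?_⟩
  have hsqrt : Tendsto (fun n => t n ^ (1 / 2 : ℝ)) atTop (𝓝 0) := by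
    simpa using ht.rpow_const (p := 1 / 2) (Or.inr (by norm_num))
  refine squeeze_zero (fun n => mul_nonneg (sq_nonneg _) (hs0 n)) (fun n => ?_) hsqrt
  calc (t n ^ (-(1 / 4) : ℝ)) ^ 2 * s n ≤ (t n ^ (-(1 / 4) : ℝ)) ^ 2 * t n := by
        gcongr; exact le_add_of_nonneg_right Nat.one_div_pos_of_nat.le
    _ = t n ^ (1 / 2 : ℝ) := by
        rw [← Real.rpow_natCast, ← Real.rpow_mul (ht0 n).le, ← Real.rpow_add_one (ht0 n).ne']
        norm_num

theorem stmt19_general {Ω : Type*} [MeasurableSpace Ω] (μ : Measure Ω)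
    [IsProbabilityMeasure μ]
    (U : ℕ → Ω → ℝ)
    (hindep : iIndepFun U μ)
    (hint : ∀ i, Integrable (U i) μ)
    (hmean : ∀ i, ∫ ω, U i ω ∂μ = 0)
    (ζ : ℝ) (hζ : 0 < ζ) (M : ℝ)
    (hmom : ∀ i, Integrable (fun ω => |U i ω| ^ (1 + ζ)) μ)
    (hmomB : ∀ i, ∫ ω, |U i ω| ^ (1 + ζ) ∂μ ≤ M)
    (a : ℕ → ℝ)
    (hO : ∃ C : ℝ, ∀ n : ℕ, ∑ i ∈ Finset.range n, |a i| ≤ C * n)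
    (ho : ∀ ε : ℝ, 0 < ε → ∃ N : ℕ, ∀ n ≥ N, ∀ i < n, |a i| ≤ ε * n) :
    ∀ ε : ℝ, 0 < ε →
      Filter.Tendsto (fun n : ℕ =>
          μ {ω | ε ≤ |(n : ℝ)⁻¹ * ∑ i ∈ Finset.range n, a i * U i ω|})
        Filter.atTop (nhds 0) := by
  intro ε hε
  obtain ⟨C, hC⟩ := hO
  obtain ⟨K, hK0, hK, hKa⟩ := exists_tendsto_atTop_sq_mul_tendsto_zero
    (fun n => sum_nonneg fun i _ => sq_nonneg (a i / n)) (tendsto_sum_sq_div_zero hC ho)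
  have hKζ : Tendsto (fun n => (∑ i ∈ range n, |a i / n|) / K n ^ ζ) atTop (𝓝 0) :=
    squeeze_zero
      (fun n => div_nonneg (sum_nonneg fun _ _ => abs_nonneg _) (Real.rpow_nonneg (hK0 n).le ζ))
      (fun n => div_le_div_of_nonneg_right (sum_abs_div_le hC n) (Real.rpow_nonneg (hK0 n).le ζ))
      (tendsto_const_nhds.div_atTop ((tendsto_rpow_atTop hζ).comp hK))
  have hsplit := (tendstoInMeasure_sum_mul_truncation range (fun n i => a i / n) hindep
    (fun i => (hint i).1) hKa).add
    (tendstoInMeasure_sum_mul_sub_truncation range (fun n i => a i / n) hint hζ.le hmom hmomB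
      hK0 hKζ)
  rw [add_zero, tendstoInMeasure_iff_norm] at hsplit
  refine (hsplit ε hε).congr fun n => congrArg μ (Set.ext fun ω => ?_)
  simp only [Set.mem_ofPred_eq, Pi.add_apply, Pi.zero_apply, sub_zero, Real.norm_eq_abs]
  rw [← sum_mul_eq_sub_integral_add_sub_integral hint hmean
    (fun i => (hint i).1.integrable_truncation), mul_sum]
  simp only [div_eq_inv_mul, mul_assoc]

/-- Weighted weak law of large numbers (Lemma 5.1 of Stefanski 1985):
for independent mean-zero `Uᵢ` with uniformly bounded `(1+ζ)`-th absolute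
moments, and scalars `aᵢ` with `Σ_{i<n}|aᵢ| = O(n)` and
`max_{i<n}|aᵢ| = o(n)`, one has `(1/n) Σ_{i<n} aᵢUᵢ → 0` in probability. -/
theorem stmt19 {Ω : Type*} [MeasurableSpace Ω] (μ : Measure Ω)
    [IsProbabilityMeasure μ]
    (U : ℕ → Ω → ℝ) (hmeas : ∀ i, Measurable (U i))
    (hindep : iIndepFun U μ)
    (hint : ∀ i, Integrable (U i) μ)
    (hmean : ∀ i, ∫ ω, U i ω ∂μ = 0)
    (ζ : ℝ) (hζ : 0 < ζ) (M : ℝ)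
    (hmom : ∀ i, Integrable (fun ω => |U i ω| ^ (1 + ζ)) μ)
    (hmomB : ∀ i, ∫ ω, |U i ω| ^ (1 + ζ) ∂μ ≤ M)
    (a : ℕ → ℝ)
    (hO : ∃ C : ℝ, ∀ n : ℕ, ∑ i ∈ Finset.range n, |a i| ≤ C * n)
    (ho : ∀ ε : ℝ, 0 < ε → ∃ N : ℕ, ∀ n ≥ N, ∀ i < n, |a i| ≤ ε * n) :
    ∀ ε : ℝ, 0 < ε →
      Filter.Tendsto (fun n : ℕ =>
          μ {ω | ε ≤ |(n : ℝ)⁻¹ * ∑ i ∈ Finset.range n, a i * U i ω|})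
        Filter.atTop (nhds 0) :=
  stmt19_general μ U hindep hint hmean ζ hζ M hmom hmomB a hO ho
end
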